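/- Let A be an arrangement in K^ℓ, H_0 = ker(α_0) ∈ A, m_0 ≥ 1, and let δ be the multiplicity concentrated at H_0 with value m_0. Let Ann(H_0) = {θ ∈ D(A, δ) : θ(α_0) = 0} and θ_δ = α_0^{m_0−1} θ_E, where θ_E is the Euler derivation. Then θ_δ ∈ D(A, δ) and D(A, δ) = S θ_δ ⊕ Ann(H_0) as a direct sum of S-modules. -/

import Mathlib

open MvPolynomial

open scoped Classical

noncomputable section

/-- A (polynomial) derivation on `K[x_1,...,x_n]`, given by its coefficient
vector: `θ` represents `∑ i, θ i * ∂/∂ x i`. -/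
abbrev MvDer (n : ℕ) (K : Type*) [Field K] : Type _ := Fin n → MvPolynomial (Fin n) K

/-- Application of a derivation (given by its coefficient vector) to a polynomial,
as a linear map over the polynomial ring. -/
def derAppL {K : Type*} [Field K] {n : ℕ} (f : MvPolynomial (Fin n) K) :
    MvDer n K →ₗ[MvPolynomial (Fin n) K] MvPolynomial (Fin n) K where
  toFun θ := ∑ i, θ i * MvPolynomial.pderiv i f
  map_add' θ₁ θ₂ := by
    simp [add_mul, Finset.sum_add_distrib]
  map_smul' c θ := by
    simp [Finset.mul_sum, smul_eq_mul, mul_assoc]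

/-- The module of derivations `D(A, μ)` of the multiarrangement with defining linear
forms `A` and multiplicity function `μ`:
`D(A,μ) = {θ : θ(α) ∈ α^(μ α) · S for all α ∈ A}`. -/
def Dmod {K : Type*} [Field K] {n : ℕ} (A : Finset (MvPolynomial (Fin n) K))
    (μ : MvPolynomial (Fin n) K → ℕ) :
    Submodule (MvPolynomial (Fin n) K) (MvDer n K) :=
  ⨅ α ∈ A, Submodule.comap (derAppL α) (Ideal.span {α ^ μ α})

/-- The module of derivations of a multiarrangement given as a finite set of
(form, multiplicity) pairs. -/
def DmodP {K : Type*} [Field K] {n : ℕ} (P : Finset (MvPolynomial (Fin n) K × ℕ)) :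
    Submodule (MvPolynomial (Fin n) K) (MvDer n K) :=
  ⨅ p ∈ P, Submodule.comap (derAppL p.1) (Ideal.span {p.1 ^ p.2})

/-- A derivation is homogeneous of polynomial degree `d` if all its coefficient
polynomials are homogeneous of degree `d`. -/
def IsHomogDer {K : Type*} [Field K] {n : ℕ} (θ : MvDer n K) (d : ℕ) : Prop :=
  ∀ i, (θ i).IsHomogeneous d

/-- `θ` is a basis of the submodule `D` of the module of derivations. -/
def IsBasisOf {K : Type*} [Field K] {n : ℕ} (θ : Fin n → MvDer n K)
    (D : Submodule (MvPolynomial (Fin n) K) (MvDer n K)) : Prop :=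
  (∀ i, θ i ∈ D) ∧ LinearIndependent (MvPolynomial (Fin n) K) θ ∧
    Submodule.span (MvPolynomial (Fin n) K) (Set.range θ) = D

/-- `D` is a free module with a homogeneous basis of degrees `e 0, ..., e (n-1)`. -/
def FreeWithExps {K : Type*} [Field K] {n : ℕ}
    (D : Submodule (MvPolynomial (Fin n) K) (MvDer n K)) (e : Fin n → ℕ) : Prop :=
  ∃ θ : Fin n → MvDer n K, IsBasisOf θ D ∧ ∀ i, IsHomogDer (θ i) (e i)

/-- `D` is a free module with a homogeneous basis whose multiset of degrees is `E`. -/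
def FreeWithExpM {K : Type*} [Field K] {n : ℕ}
    (D : Submodule (MvPolynomial (Fin n) K) (MvDer n K)) (E : Multiset ℕ) : Prop :=
  ∃ (θ : Fin n → MvDer n K) (d : Fin n → ℕ), IsBasisOf θ D ∧
    (∀ i, IsHomogDer (θ i) (d i)) ∧ Multiset.map d Finset.univ.val = E

/-- The zero set (kernel) of the linear form given by the polynomial `α`. -/
def kerV {K : Type*} [Field K] {n : ℕ} (α : MvPolynomial (Fin n) K) : Set (Fin n → K) :=
  {v | MvPolynomial.eval v α = 0}

/-- Pull back a polynomial along a linear embedding `ι : K^m → K^n`; for a linear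
form `α` this is the restriction of `α` to the image of `ι`, expressed in the
coordinates of `K^m`. -/
def restrictForm {K : Type*} [Field K] {m n : ℕ} (ι : (Fin m → K) →ₗ[K] (Fin n → K))
    (α : MvPolynomial (Fin n) K) : MvPolynomial (Fin m) K :=
  MvPolynomial.aeval
    (fun i : Fin n => ∑ j : Fin m, MvPolynomial.C (ι (Pi.single j 1) i) * MvPolynomial.X j) α

/-- `A''` is (a set of defining forms for) the restriction of the arrangement `A`
to the hyperplane `H₀ = ker α₀`, where `ι` is a linear parametrization of `H₀`:
the elements of `A''` are nonzero linear forms with pairwise distinct kernels,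
whose kernels are exactly the intersections `H ∩ H₀` for `H ∈ A \ {H₀}`. -/
def IsRestriction {K : Type*} [Field K] {m n : ℕ} (A : Finset (MvPolynomial (Fin n) K))
    (α₀ : MvPolynomial (Fin n) K) (ι : (Fin m → K) →ₗ[K] (Fin n → K))
    (A'' : Finset (MvPolynomial (Fin m) K)) : Prop :=
  (∀ β ∈ A'', β.IsHomogeneous 1 ∧ β ≠ 0) ∧
  (∀ β₁ ∈ A'', ∀ β₂ ∈ A'', kerV β₁ = kerV β₂ → β₁ = β₂) ∧
  (∀ α ∈ A, α ≠ α₀ → ∃ β ∈ A'', kerV β = kerV (restrictForm ι α)) ∧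
  (∀ β ∈ A'', ∃ α ∈ A, α ≠ α₀ ∧ kerV β = kerV (restrictForm ι α))

/-- Ziegler's canonical multiplicity: for a hyperplane `Y = ker β` of the
restriction, `κ(Y) = |A_Y| - 1`, the number of hyperplanes of `A` (other than
`H₀`) lying above `Y`. -/
def zieglerMult {K : Type*} [Field K] {m n : ℕ} (A : Finset (MvPolynomial (Fin n) K))
    (ι : (Fin m → K) →ₗ[K] (Fin n → K)) (β : MvPolynomial (Fin m) K) : ℕ :=
  ({α : MvPolynomial (Fin n) K |
      α ∈ A ∧ ∀ w ∈ kerV β, MvPolynomial.eval (ι w) α = 0}).ncard - 1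

end

/-! By Euler's identity `θ_δ(α) = α₀^(m₀-1) α` for every linear form `α`, so `θ_δ ∈ D(A, δ)` and
`θ_δ(α₀) = α₀^m₀`. Since every `θ ∈ D(A, δ)` has `θ(α₀) = f α₀^m₀` for some `f`, the derivation
`θ - f θ_δ` lies in `Ann(H₀)`; and `f θ_δ ∈ Ann(H₀)` forces `f α₀^m₀ = 0`, i.e. `f = 0`. -/

section Decomposition

variable {R M : Type*} [CommRing R] [AddCommGroup M] [Module R M]

theorem Submodule.span_singleton_sup_inf_ker_eq {D : Submodule R M} {φ : M →ₗ[R] R} {t : M}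
    (ht : t ∈ D) (hD : ∀ x ∈ D, φ t ∣ φ x) :
    Submodule.span R {t} ⊔ (D ⊓ LinearMap.ker φ) = D := by
  refine le_antisymm (sup_le ((Submodule.span_singleton_le_iff_mem _ _).2 ht) inf_le_left)
    fun x hx => ?_
  obtain ⟨f, hf⟩ := hD x hx
  have hker : x - f • t ∈ D ⊓ LinearMap.ker φ := by
    refine ⟨D.sub_mem hx (D.smul_mem f ht), LinearMap.mem_ker.2 ?_⟩
    rw [map_sub, map_smul, smul_eq_mul, hf, mul_comm, sub_self]
  exact Submodule.mem_sup.2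
    ⟨f • t, Submodule.smul_mem _ _ (Submodule.mem_span_singleton_self t), _, hker, by abel⟩

theorem Submodule.disjoint_span_singleton_ker [NoZeroDivisors R] {φ : M →ₗ[R] R} {t : M}
    (ht : φ t ≠ 0) : Disjoint (Submodule.span R {t}) (LinearMap.ker φ) := by
  refine Submodule.disjoint_def.2 fun x hspan hker => ?_
  obtain ⟨f, rfl⟩ := Submodule.mem_span_singleton.1 hspan
  replace hker := LinearMap.mem_ker.1 hker
  rw [map_smul, smul_eq_mul, mul_eq_zero] at hker
  rw [hker.resolve_right ht, zero_smul]

end Decomposition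

section Derivations

variable {K : Type*} [Field K] {n : ℕ}

theorem mem_Dmod_iff {A : Finset (MvPolynomial (Fin n) K)} {μ : MvPolynomial (Fin n) K → ℕ}
    {θ : MvDer n K} : θ ∈ Dmod A μ ↔ ∀ α ∈ A, α ^ μ α ∣ derAppL α θ := by
  simp only [Dmod, Submodule.mem_iInf, Submodule.mem_comap, Ideal.mem_span_singleton]

theorem derAppL_mul_euler {f g : MvPolynomial (Fin n) K} {d : ℕ} (hf : f.IsHomogeneous d) :
    derAppL f (fun i => g * X i) = d • (g * f) := by
  change ∑ i, g * X i * pderiv i f = _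
  simp_rw [mul_assoc, ← Finset.mul_sum, hf.sum_X_mul_pderiv, mul_smul_comm]

end Derivations

theorem concentrated_multiplicity_decomposition_general
    {K : Type*} [Field K] {n : ℕ}
    (A : Finset (MvPolynomial (Fin (n + 1)) K))
    (hforms : ∀ α ∈ A, α.IsHomogeneous 1 ∧ α ≠ 0)
    (α₀ : MvPolynomial (Fin (n + 1)) K) (hα₀ : α₀ ∈ A)
    (m₀ : ℕ) (hm₀ : 1 ≤ m₀)
    (δ : MvPolynomial (Fin (n + 1)) K → ℕ)
    (hδ : δ = fun α => if α = α₀ then m₀ else 1)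
    (θδ : MvDer (n + 1) K)
    (hθδ : θδ = fun i => α₀ ^ (m₀ - 1) * MvPolynomial.X i)
    (Ann : Submodule (MvPolynomial (Fin (n + 1)) K) (MvDer (n + 1) K))
    (hAnn : Ann = Dmod A δ ⊓ LinearMap.ker (derAppL α₀)) :
    θδ ∈ Dmod A δ ∧
      Submodule.span (MvPolynomial (Fin (n + 1)) K) {θδ} ⊔ Ann = Dmod A δ ∧
      Submodule.span (MvPolynomial (Fin (n + 1)) K) {θδ} ⊓ Ann = ⊥ := by
  subst hδ hθδ hAnn
  have hval : ∀ α ∈ A, derAppL α (fun i => α₀ ^ (m₀ - 1) * X i) = α₀ ^ (m₀ - 1) * α :=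
    fun α hα => by rw [derAppL_mul_euler (hforms α hα).1, one_smul]
  have hval₀ : derAppL α₀ (fun i => α₀ ^ (m₀ - 1) * X i) = α₀ ^ m₀ := by
    rw [hval α₀ hα₀, ← pow_succ, Nat.sub_add_cancel hm₀]
  have hθD : (fun i => α₀ ^ (m₀ - 1) * X i) ∈ Dmod A fun α => if α = α₀ then m₀ else 1 := by
    refine mem_Dmod_iff.2 fun α hα => ?_
    split_ifs with h
    · rw [h, hval₀]
    · rw [pow_one, hval α hα]
      exact dvd_mul_left α _
  refine ⟨hθD, Submodule.span_singleton_sup_inf_ker_eq hθD fun θ hθ => ?_,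
    disjoint_iff.1 ((Submodule.disjoint_span_singleton_ker ?_).mono_right inf_le_right)⟩
  · simpa [hval₀] using mem_Dmod_iff.1 hθ α₀ hα₀
  · rw [hval₀]
    exact pow_ne_zero _ (hforms α₀ hα₀).2

/-- Let `δ` be the multiplicity concentrated at `H₀ = ker α₀` with value `m₀`,
`θ_E` the Euler derivation and `θ_δ = α₀^(m₀-1) θ_E`. Then `θ_δ ∈ D(A, δ)` and
`D(A, δ) = S·θ_δ ⊕ Ann(H₀)`, where `Ann(H₀) = {θ ∈ D(A,δ) : θ(α₀) = 0}`. -/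
theorem concentrated_multiplicity_decomposition
    {K : Type*} [Field K] [CharZero K] {n : ℕ}
    (A : Finset (MvPolynomial (Fin (n + 1)) K))
    (hforms : ∀ α ∈ A, α.IsHomogeneous 1 ∧ α ≠ 0)
    (hdist : ∀ α ∈ A, ∀ β ∈ A, kerV α = kerV β → α = β)
    (α₀ : MvPolynomial (Fin (n + 1)) K) (hα₀ : α₀ ∈ A)
    (m₀ : ℕ) (hm₀ : 1 ≤ m₀)
    (δ : MvPolynomial (Fin (n + 1)) K → ℕ)
    (hδ : δ = fun α => if α = α₀ then m₀ else 1)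
    (θδ : MvDer (n + 1) K)
    (hθδ : θδ = fun i => α₀ ^ (m₀ - 1) * MvPolynomial.X i)
    (Ann : Submodule (MvPolynomial (Fin (n + 1)) K) (MvDer (n + 1) K))
    (hAnn : Ann = Dmod A δ ⊓ LinearMap.ker (derAppL α₀)) :
    θδ ∈ Dmod A δ ∧
      Submodule.span (MvPolynomial (Fin (n + 1)) K) {θδ} ⊔ Ann = Dmod A δ ∧
      Submodule.span (MvPolynomial (Fin (n + 1)) K) {θδ} ⊓ Ann = ⊥ :=
  concentrated_multiplicity_decomposition_general A hforms α₀ hα₀ m₀ hm₀ δ hδ θδ hθδ Ann hAnn
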